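/- arXiv:1508.00614 — 5 statements merged into one kernel-verified Lean document; each statement's English description precedes it below -/
import Mathlib

section
/- Every stable matching is popular: if M is a stable matching in a bipartite graph G = (A ∪ B, E) with strict preference lists, then for every matching M' in G, the number of vertices preferring M to M' is at least the number of vertices preferring M' to M. -/
open Classical

/-- A bipartite graph `G = (A ∪ B, E)` with strict preference lists:
`adj` is the edge relation, and each vertex ranks its neighbors by a rank
function (lower rank = more preferred), injective on neighbors. -/
structure PrefSys (A B : Type) where
  adj : A → B → Prop
  rankA : A → B → ℕ
  rankB : B → A → ℕ
  rankA_inj : ∀ a b b', adj a b → adj a b' → rankA a b = rankA a b' → b = b'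
  rankB_inj : ∀ b a a', adj a b → adj a' b → rankB b a = rankB b a' → a = a'

namespace PrefSys

variable {A B : Type} (P : PrefSys A B)

/-- `M` is a matching of `G`: a set of edges, no two sharing a vertex. -/
def IsMatching (M : Finset (A × B)) : Prop :=
  (∀ p ∈ M, P.adj p.1 p.2) ∧
  (∀ p ∈ M, ∀ q ∈ M, p.1 = q.1 → p = q) ∧
  (∀ p ∈ M, ∀ q ∈ M, p.2 = q.2 → p = q)

/-- Vertex `a ∈ A` prefers matching `M` to matching `M'`:
`a` is matched in `M` and either unmatched in `M'` or matched to a strictly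
worse partner in `M'`. -/
def prefA (M M' : Finset (A × B)) (a : A) : Prop :=
  ∃ b, (a, b) ∈ M ∧ ∀ b', (a, b') ∈ M' → P.rankA a b < P.rankA a b'

/-- Vertex `b ∈ B` prefers matching `M` to matching `M'`. -/
def prefB (M M' : Finset (A × B)) (b : B) : Prop :=
  ∃ a, (a, b) ∈ M ∧ ∀ a', (a', b) ∈ M' → P.rankB b a < P.rankB b a'

/-- `φ(M, M')`: the number of vertices preferring `M` to `M'`. -/
noncomputable def phi (M M' : Finset (A × B)) : ℕ :=
  Nat.card {a : A // P.prefA M M' a} + Nat.card {b : B // P.prefB M M' b}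

/-- A matching is popular if it never loses a head-to-head election. -/
def Popular (M : Finset (A × B)) : Prop :=
  P.IsMatching M ∧ ∀ M', P.IsMatching M' → P.phi M' M ≤ P.phi M M'

/-- `a`'s vote on the edge `(a,b)` versus its `M`-partner is `+`. -/
def voteAplus (M : Finset (A × B)) (a : A) (b : B) : Prop :=
  ∀ b', (a, b') ∈ M → P.rankA a b < P.rankA a b'

/-- `b`'s vote on the edge `(a,b)` versus its `M`-partner is `+`. -/
def voteBplus (M : Finset (A × B)) (a : A) (b : B) : Prop :=
  ∀ a', (a', b) ∈ M → P.rankB b a < P.rankB b a'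

/-- `(a,b)` is a blocking edge (an edge outside `M` labeled `(+,+)`). -/
def Blocking (M : Finset (A × B)) (a : A) (b : B) : Prop :=
  P.adj a b ∧ (a, b) ∉ M ∧ P.voteAplus M a b ∧ P.voteBplus M a b

/-- A stable matching: a matching with no blocking edge. -/
def Stable (M : Finset (A × B)) : Prop :=
  P.IsMatching M ∧ ∀ a b, ¬ P.Blocking M a b

/-- A dominant matching: popular, and more popular than every larger matching. -/
def Dominant (M : Finset (A × B)) : Prop :=
  P.Popular M ∧ ∀ M', P.IsMatching M' → M.card < M'.card → P.phi M' M < P.phi M M'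

/-- The edge `(a,b)` survives in the subgraph `G_M` (i.e. it is an edge of `G`
that is in `M` or is not labeled `(-,-)`). -/
def inGM (M : Finset (A × B)) (a : A) (b : B) : Prop :=
  P.adj a b ∧ ((a, b) ∈ M ∨ P.voteAplus M a b ∨ P.voteBplus M a b)

end PrefSys

/-- Every stable matching is popular. -/
theorem stable_is_popular {A B : Type} [Fintype A] [Fintype B]
    (P : PrefSys A B) (M : Finset (A × B)) (hM : P.Stable M) :
    ∀ M', P.IsMatching M' → P.phi M' M ≤ P.phi M M' := by

  intro M' hM'
  obtain ⟨hMm, hstab⟩ := hM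
  -- If a prefers M', then its M'-partner b prefers M.
  have key1 : ∀ a, P.prefA M' M a → ∃ b, (a, b) ∈ M' ∧ P.prefB M M' b := by
    intro a ⟨b, hbM', hlt⟩
    refine ⟨b, hbM', ?_⟩
    have hnotM : (a, b) ∉ M := fun h => lt_irrefl _ (hlt b h)
    have hadj : P.adj a b := hM'.1 _ hbM'
    have hnb := hstab a b
    simp only [PrefSys.Blocking, not_and] at hnb
    have hnBp : ¬ P.voteBplus M a b := hnb hadj hnotM hlt
    simp only [PrefSys.voteBplus, not_forall] at hnBp
    obtain ⟨a', ha'M, hle⟩ := hnBp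
    push_neg at hle
    have hne : a' ≠ a := fun h => hnotM (h ▸ ha'M)
    have hlt' : P.rankB b a' < P.rankB b a := by
      rcases lt_or_eq_of_le hle with h | h
      · exact h
      · exact absurd (P.rankB_inj b a' a (hMm.1 _ ha'M) hadj h) hne
    refine ⟨a', ha'M, fun a'' ha''M' => ?_⟩
    have : a'' = a := by
      have := hM'.2.2 _ ha''M' _ hbM' rfl
      exact (Prod.mk.injEq _ _ _ _ ▸ this).1
    rw [this]; exact hlt'
  have key2 : ∀ b, P.prefB M' M b → ∃ a, (a, b) ∈ M' ∧ P.prefA M M' a := by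
    intro b ⟨a, haM', hlt⟩
    refine ⟨a, haM', ?_⟩
    have hnotM : (a, b) ∉ M := fun h => lt_irrefl _ (hlt a h)
    have hadj : P.adj a b := hM'.1 _ haM'
    have hnb := hstab a b
    simp only [PrefSys.Blocking, not_and] at hnb
    have hnAp : ¬ P.voteAplus M a b := by
      intro hAp
      exact hnb hadj hnotM hAp hlt
    simp only [PrefSys.voteAplus, not_forall] at hnAp
    obtain ⟨b', hb'M, hle⟩ := hnAp
    push_neg at hle
    have hne : b' ≠ b := fun h => hnotM (h ▸ hb'M)
    have hlt' : P.rankA a b' < P.rankA a b := by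
      rcases lt_or_eq_of_le hle with h | h
      · exact h
      · exact absurd (P.rankA_inj a b' b (hMm.1 _ hb'M) hadj h) hne
    refine ⟨b', hb'M, fun b'' hb''M' => ?_⟩
    have : b'' = b := by
      have := hM'.2.1 _ hb''M' _ haM' rfl
      exact (Prod.mk.injEq _ _ _ _ ▸ this).2
    rw [this]; exact hlt'
  -- build injections
  have h1 : Nat.card {a : A // P.prefA M' M a} ≤ Nat.card {b : B // P.prefB M M' b} := by
    have : ∃ f : {a : A // P.prefA M' M a} → {b : B // P.prefB M M' b},
        Function.Injective f := by
      refine ⟨fun a => ⟨Classical.choose (key1 a.1 a.2),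
        (Classical.choose_spec (key1 a.1 a.2)).2⟩, ?_⟩
      intro a1 a2 h
      have h1' := (Classical.choose_spec (key1 a1.1 a1.2)).1
      have h2' := (Classical.choose_spec (key1 a2.1 a2.2)).1
      have hb : Classical.choose (key1 a1.1 a1.2) = Classical.choose (key1 a2.1 a2.2) :=
        congrArg Subtype.val h
      rw [hb] at h1'
      have := hM'.2.2 _ h1' _ h2' rfl
      exact Subtype.ext (Prod.mk.injEq _ _ _ _ ▸ this).1
    obtain ⟨f, hf⟩ := this
    exact Nat.card_le_card_of_injective f hf
  have h2 : Nat.card {b : B // P.prefB M' M b} ≤ Nat.card {a : A // P.prefA M M' a} := by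
    have : ∃ f : {b : B // P.prefB M' M b} → {a : A // P.prefA M M' a},
        Function.Injective f := by
      refine ⟨fun b => ⟨Classical.choose (key2 b.1 b.2),
        (Classical.choose_spec (key2 b.1 b.2)).2⟩, ?_⟩
      intro b1 b2 h
      have h1' := (Classical.choose_spec (key2 b1.1 b1.2)).1
      have h2' := (Classical.choose_spec (key2 b2.1 b2.2)).1
      have ha : Classical.choose (key2 b1.1 b1.2) = Classical.choose (key2 b2.1 b2.2) :=
        congrArg Subtype.val h
      rw [ha] at h1'
      have := hM'.2.1 _ h1' _ h2' rfl
      exact Subtype.ext (Prod.mk.injEq _ _ _ _ ▸ this).2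
    obtain ⟨f, hf⟩ := this
    exact Nat.card_le_card_of_injective f hf
  unfold PrefSys.phi
  omega
end

section
/- Every stable matching in a bipartite graph with strict preference lists is more popular than any matching of strictly smaller size: if M is stable and |M'| < |M|, then φ(M, M') > φ(M', M). -/
open Classical

/-- Every stable matching is more popular than any matching of
strictly smaller size. -/
theorem stable_beats_smaller {A B : Type} [Fintype A] [Fintype B]
    (P : PrefSys A B) (M : Finset (A × B)) (hM : P.Stable M) :
    ∀ M', P.IsMatching M' → M'.card < M.card → P.phi M' M < P.phi M M' := by
  classical
  intro M' hM' hcard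
  obtain ⟨⟨hMadj, hM1, hM2⟩, hstab⟩ := hM
  obtain ⟨hM'adj, hM'1, hM'2⟩ := hM'
  set SA : Finset A := Finset.univ.filter (fun a => P.prefA M M' a) with hSAdef
  set SB : Finset B := Finset.univ.filter (fun b => P.prefB M M' b) with hSBdef
  set SA' : Finset A := Finset.univ.filter (fun a => P.prefA M' M a) with hSA'def
  set SB' : Finset B := Finset.univ.filter (fun b => P.prefB M' M b) with hSB'def
  have cardsub : ∀ {α : Type} [Fintype α] (p : α → Prop),
      Nat.card {x : α // p x} = (Finset.univ.filter p).card := by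
    intro α _ p
    rw [Nat.card_eq_fintype_card, Fintype.card_subtype]
  have hphi1 : P.phi M M' = SA.card + SB.card := by
    rw [PrefSys.phi, cardsub, cardsub]
  have hphi2 : P.phi M' M = SA'.card + SB'.card := by
    rw [PrefSys.phi, cardsub, cardsub]
  set MA : Finset A := M.image Prod.fst with hMAdef
  set MB : Finset B := M.image Prod.snd with hMBdef
  set MA' : Finset A := M'.image Prod.fst with hMA'def
  set MB' : Finset B := M'.image Prod.snd with hMB'def
  set TA : Finset A := SA ∩ MA' with hTAdef
  set TB : Finset B := SB ∩ MB' with hTBdef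
  -- Every a ∈ SA' is matched in M'; count SA' via edges of M'.
  have hSA'count : SA'.card = (M'.filter (fun e => e.1 ∈ SA')).card := by
    refine (Finset.card_bij (fun e _ => e.1) ?_ ?_ ?_).symm
    · intro e he
      exact (Finset.mem_filter.1 he).2
    · intro e he f hf hef
      exact hM'1 e (Finset.mem_filter.1 he).1 f (Finset.mem_filter.1 hf).1 hef
    · intro a ha
      obtain ⟨b, hb, -⟩ := (Finset.mem_filter.1 ha).2
      exact ⟨(a, b), Finset.mem_filter.2 ⟨hb, ha⟩, rfl⟩
  have hSB'count : SB'.card = (M'.filter (fun e => e.2 ∈ SB')).card := by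
    refine (Finset.card_bij (fun e _ => e.2) ?_ ?_ ?_).symm
    · intro e he
      exact (Finset.mem_filter.1 he).2
    · intro e he f hf hef
      exact hM'2 e (Finset.mem_filter.1 he).1 f (Finset.mem_filter.1 hf).1 hef
    · intro b hb
      obtain ⟨a, ha, -⟩ := (Finset.mem_filter.1 hb).2
      exact ⟨(a, b), Finset.mem_filter.2 ⟨ha, hb⟩, rfl⟩
  have hTAcount : TA.card = (M'.filter (fun e => e.1 ∈ TA)).card := by
    refine (Finset.card_bij (fun e _ => e.1) ?_ ?_ ?_).symm
    · intro e he
      exact (Finset.mem_filter.1 he).2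
    · intro e he f hf hef
      exact hM'1 e (Finset.mem_filter.1 he).1 f (Finset.mem_filter.1 hf).1 hef
    · intro a ha
      obtain ⟨e, he, he1⟩ := Finset.mem_image.1 (Finset.mem_inter.1 ha).2
      exact ⟨e, Finset.mem_filter.2 ⟨he, he1 ▸ ha⟩, he1⟩
  have hTBcount : TB.card = (M'.filter (fun e => e.2 ∈ TB)).card := by
    refine (Finset.card_bij (fun e _ => e.2) ?_ ?_ ?_).symm
    · intro e he
      exact (Finset.mem_filter.1 he).2
    · intro e he f hf hef
      exact hM'2 e (Finset.mem_filter.1 he).1 f (Finset.mem_filter.1 hf).1 hef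
    · intro b hb
      obtain ⟨e, he, he2⟩ := Finset.mem_image.1 (Finset.mem_inter.1 hb).2
      exact ⟨e, Finset.mem_filter.2 ⟨he, he2 ▸ hb⟩, he2⟩
  -- Pointwise inequality on each edge of M'.
  have key : ∀ e ∈ M',
      ((if e.1 ∈ SA' then 1 else 0) + (if e.2 ∈ SB' then 1 else 0) : ℕ) ≤
      (if e.1 ∈ TA then 1 else 0) + (if e.2 ∈ TB then 1 else 0) := by
    rintro ⟨a, b⟩ he
    have hadj : P.adj a b := hM'adj _ he
    by_cases hmem : (a, b) ∈ M
    · -- edge in both matchings: neither endpoint prefers M'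
      have ha : a ∉ SA' := by
        intro ha
        obtain ⟨b0, hb0, hlt⟩ := (Finset.mem_filter.1 ha).2
        have hbb : b0 = b := congrArg Prod.snd (hM'1 (a, b0) hb0 (a, b) he rfl)
        rw [hbb] at hlt
        exact lt_irrefl _ (hlt b hmem)
      have hb : b ∉ SB' := by
        intro hb
        obtain ⟨a0, ha0, hlt⟩ := (Finset.mem_filter.1 hb).2
        have haa : a0 = a := congrArg Prod.fst (hM'2 (a0, b) ha0 (a, b) he rfl)
        rw [haa] at hlt
        exact lt_irrefl _ (hlt a hmem)
      simp [ha, hb]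
    · -- edge not in M: not blocking
      have hnb := hstab a b
      rw [PrefSys.Blocking] at hnb
      push_neg at hnb
      rcases Classical.em (P.voteAplus M a b) with hva | hva
      · -- then b's vote must fail
        have hvb : ¬ P.voteBplus M a b := hnb hadj hmem hva
        rw [PrefSys.voteBplus] at hvb
        push_neg at hvb
        obtain ⟨a', ha', hge⟩ := hvb
        have hne : a' ≠ a := by
          rintro rfl
          exact hmem ha'
        have hstrict : P.rankB b a' < P.rankB b a := by
          rcases lt_or_eq_of_le hge with h | h
          · exact h
          · exact absurd (P.rankB_inj b a a' hadj (hMadj _ ha') h.symm).symm hne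
        have hbT : b ∈ TB := by
          refine Finset.mem_inter.2 ⟨Finset.mem_filter.2 ⟨Finset.mem_univ _, ?_⟩,
            Finset.mem_image.2 ⟨(a, b), he, rfl⟩⟩
          refine ⟨a', ha', ?_⟩
          intro a'' ha''
          have : a'' = a := congrArg Prod.fst (hM'2 (a'', b) ha'' (a, b) he rfl)
          subst this
          exact hstrict
        have hbS' : b ∉ SB' := by
          intro hb
          obtain ⟨a0, ha0, hlt⟩ := (Finset.mem_filter.1 hb).2
          have : a0 = a := congrArg Prod.fst (hM'2 (a0, b) ha0 (a, b) he rfl)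
          subst this
          exact absurd hstrict (not_lt.2 (le_of_lt (hlt a' ha')))
        simp only [hbT, hbS', if_true, if_false]
        have : (if a ∈ SA' then 1 else 0 : ℕ) ≤ 1 := by split <;> omega
        omega
      · rw [PrefSys.voteAplus] at hva
        push_neg at hva
        obtain ⟨b', hb', hge⟩ := hva
        have hne : b' ≠ b := by
          rintro rfl
          exact hmem hb'
        have hstrict : P.rankA a b' < P.rankA a b := by
          rcases lt_or_eq_of_le hge with h | h
          · exact h
          · exact absurd (P.rankA_inj a b b' hadj (hMadj _ hb') h.symm).symm hne
        have haT : a ∈ TA := by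
          refine Finset.mem_inter.2 ⟨Finset.mem_filter.2 ⟨Finset.mem_univ _, ?_⟩,
            Finset.mem_image.2 ⟨(a, b), he, rfl⟩⟩
          refine ⟨b', hb', ?_⟩
          intro b'' hb''
          have : b'' = b := congrArg Prod.snd (hM'1 (a, b'') hb'' (a, b) he rfl)
          subst this
          exact hstrict
        have haS' : a ∉ SA' := by
          intro ha
          obtain ⟨b0, hb0, hlt⟩ := (Finset.mem_filter.1 ha).2
          have : b0 = b := congrArg Prod.snd (hM'1 (a, b0) hb0 (a, b) he rfl)
          subst this
          exact absurd hstrict (not_lt.2 (le_of_lt (hlt b' hb')))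
        simp only [haT, haS', if_true, if_false]
        have : (if b ∈ SB' then 1 else 0 : ℕ) ≤ 1 := by split <;> omega
        omega
  -- Sum the pointwise inequality.
  have hsum : SA'.card + SB'.card ≤ TA.card + TB.card := by
    rw [hSA'count, hSB'count, hTAcount, hTBcount,
      Finset.card_filter, Finset.card_filter, Finset.card_filter, Finset.card_filter,
      ← Finset.sum_add_distrib, ← Finset.sum_add_distrib]
    exact Finset.sum_le_sum key
  -- Vertices matched in M but not in M' prefer M vacuously.
  have hUAsub : MA \ MA' ⊆ SA \ MA' := by
    intro a ha
    obtain ⟨haM, haM'⟩ := Finset.mem_sdiff.1 ha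
    obtain ⟨⟨a1, b1⟩, he, rfl⟩ := Finset.mem_image.1 haM
    refine Finset.mem_sdiff.2 ⟨Finset.mem_filter.2 ⟨Finset.mem_univ _, ?_⟩, haM'⟩
    refine ⟨b1, he, ?_⟩
    intro b' hb'
    exact absurd (Finset.mem_image.2 ⟨(a1, b'), hb', rfl⟩) haM'
  have hUBsub : MB \ MB' ⊆ SB \ MB' := by
    intro b hb
    obtain ⟨hbM, hbM'⟩ := Finset.mem_sdiff.1 hb
    obtain ⟨⟨a1, b1⟩, he, rfl⟩ := Finset.mem_image.1 hbM
    refine Finset.mem_sdiff.2 ⟨Finset.mem_filter.2 ⟨Finset.mem_univ _, ?_⟩, hbM'⟩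
    refine ⟨a1, he, ?_⟩
    intro a' ha'
    exact absurd (Finset.mem_image.2 ⟨(a', b1), ha', rfl⟩) hbM'
  have hMAcard : MA.card = M.card := Finset.card_image_of_injOn
    (fun e he f hf hef => hM1 e he f hf hef)
  have hMBcard : MB.card = M.card := Finset.card_image_of_injOn
    (fun e he f hf hef => hM2 e he f hf hef)
  have hMA'card : MA'.card ≤ M'.card := Finset.card_image_le
  have hMB'card : MB'.card ≤ M'.card := Finset.card_image_le
  have hUA : 1 ≤ (SA \ MA').card := by
    have h1 : MA.card - MA'.card ≤ (MA \ MA').card := Finset.le_card_sdiff _ _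
    have h2 : (MA \ MA').card ≤ (SA \ MA').card := Finset.card_le_card hUAsub
    omega
  have hUB : 1 ≤ (SB \ MB').card := by
    have h1 : MB.card - MB'.card ≤ (MB \ MB').card := Finset.le_card_sdiff _ _
    have h2 : (MB \ MB').card ≤ (SB \ MB').card := Finset.card_le_card hUBsub
    omega
  have hSAsplit : TA.card + (SA \ MA').card = SA.card :=
    Finset.card_inter_add_card_sdiff SA MA'
  have hSBsplit : TB.card + (SB \ MB').card = SB.card :=
    Finset.card_inter_add_card_sdiff SB MB'
  rw [hphi1, hphi2]
  omega
end

section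
/- Any popular matching M that is more popular than every matching of strictly smaller size is a stable matching. -/
open Classical

lemma card_le_one_of_subsingleton (α : Type*) [Subsingleton α] : Nat.card α ≤ 1 := by
  have h := Nat.card_le_card_of_injective (α := α) (β := Unit) (fun _ => ())
    (fun x y _ => Subsingleton.elim x y)
  simpa using h

/-- Any popular matching that is more popular than every matching
of strictly smaller size is stable. -/
theorem popular_beating_smaller_is_stable {A B : Type} [Fintype A] [Fintype B]
    (P : PrefSys A B) (M : Finset (A × B)) (hpop : P.Popular M)
    (hbeat : ∀ M', P.IsMatching M' → M'.card < M.card → P.phi M' M < P.phi M M') :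
    P.Stable M := by
  obtain ⟨⟨hM, hM1, hM2⟩, hpop2⟩ := hpop
  refine ⟨⟨hM, hM1, hM2⟩, ?_⟩
  intro a b hblk
  obtain ⟨hadj, hnotM, hvA, hvB⟩ := hblk
  set Ma := M.filter (fun p => p.1 ≠ a ∧ p.2 ≠ b) with hMadef
  set M' := insert (a, b) Ma with hM'def
  have hmem : ∀ p : A × B, p ∈ M' ↔ p = (a, b) ∨ (p ∈ M ∧ p.1 ≠ a ∧ p.2 ≠ b) := by
    intro p
    simp [hM'def, hMadef, Finset.mem_insert, Finset.mem_filter]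
  -- M' is a matching
  have hmatch' : P.IsMatching M' := by
    refine ⟨?_, ?_, ?_⟩
    · intro p hp
      rcases (hmem p).1 hp with h | ⟨hpM, _, _⟩
      · subst h; exact hadj
      · exact hM p hpM
    · intro p hp q hq h1
      rcases (hmem p).1 hp with hp' | ⟨hpM, hpa, hpb⟩ <;>
        rcases (hmem q).1 hq with hq' | ⟨hqM, hqa, hqb⟩
      · rw [hp', hq']
      · exact absurd (h1 ▸ hqa) (by rw [hp']; simp)
      · exact absurd (h1 ▸ hpa) (by rw [hq']; simp)
      · exact hM1 p hpM q hqM h1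
    · intro p hp q hq h2
      rcases (hmem p).1 hp with hp' | ⟨hpM, hpa, hpb⟩ <;>
        rcases (hmem q).1 hq with hq' | ⟨hqM, hqa, hqb⟩
      · rw [hp', hq']
      · exact absurd (h2 ▸ hqb) (by rw [hp']; simp)
      · exact absurd (h2 ▸ hpb) (by rw [hq']; simp)
      · exact hM2 p hpM q hqM h2
  have habM' : (a, b) ∈ M' := (hmem _).2 (Or.inl rfl)
  -- a and b both prefer M' to M
  have hpa : P.prefA M' M a := ⟨b, habM', hvA⟩
  have hpb : P.prefB M' M b := ⟨a, habM', hvB⟩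
  have h2le : 2 ≤ P.phi M' M := by
    haveI : Nonempty {x : A // P.prefA M' M x} := ⟨⟨a, hpa⟩⟩
    haveI : Nonempty {y : B // P.prefB M' M y} := ⟨⟨b, hpb⟩⟩
    have hA : 0 < Nat.card {x : A // P.prefA M' M x} := Nat.card_pos
    have hB : 0 < Nat.card {y : B // P.prefB M' M y} := Nat.card_pos
    have : 1 + 1 ≤ Nat.card {x : A // P.prefA M' M x} +
        Nat.card {y : B // P.prefB M' M y} := Nat.add_le_add hA hB
    simpa [PrefSys.phi] using this
  -- anyone preferring M to M' must be b's M-partner (A-side) or a's M-partner (B-side)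
  have hAkey : ∀ x, P.prefA M M' x → (x, b) ∈ M := by
    intro x ⟨c, hcM, hc⟩
    have hnot : (x, c) ∉ M' := fun h => lt_irrefl _ (hc c h)
    have hor : x = a ∨ c = b := by
      by_contra h
      push_neg at h
      exact hnot ((hmem _).2 (Or.inr ⟨hcM, h.1, h.2⟩))
    rcases hor with h | h
    · subst h
      exact absurd (hc b habM') (not_lt.2 (le_of_lt (hvA c hcM)))
    · subst h; exact hcM
  have hBkey : ∀ y, P.prefB M M' y → (a, y) ∈ M := by
    intro y ⟨x, hxM, hx⟩
    have hnot : (x, y) ∉ M' := fun h => lt_irrefl _ (hx x h)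
    have hor : x = a ∨ y = b := by
      by_contra h
      push_neg at h
      exact hnot ((hmem _).2 (Or.inr ⟨hxM, h.1, h.2⟩))
    rcases hor with h | h
    · subst h; exact hxM
    · subst h
      exact absurd (hx a habM') (not_lt.2 (le_of_lt (hvB x hxM)))
  have hAsub : Subsingleton {x : A // P.prefA M M' x} := by
    constructor
    rintro ⟨x, hx⟩ ⟨x', hx'⟩
    have := hM2 (x, b) (hAkey x hx) (x', b) (hAkey x' hx') rfl
    exact Subtype.ext (congrArg Prod.fst this)
  have hBsub : Subsingleton {y : B // P.prefB M M' y} := by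
    constructor
    rintro ⟨y, hy⟩ ⟨y', hy'⟩
    have := hM1 (a, y) (hBkey y hy) (a, y') (hBkey y' hy') rfl
    exact Subtype.ext (congrArg Prod.snd this)
  by_cases hb : ∃ x, (x, b) ∈ M
  · by_cases ha : ∃ c, (a, c) ∈ M
    · -- both matched: M' is strictly smaller
      obtain ⟨x, hx⟩ := hb
      obtain ⟨c, hc⟩ := ha
      have hne : (a, c) ≠ (x, b) := by
        intro h
        have hcb : c = b := (Prod.ext_iff.1 h).2
        rw [hcb] at hc
        exact hnotM hc
      have hsmall : M'.card < M.card := by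
        have hsub : Ma ⊆ (M.erase (a, c)).erase (x, b) := by
          intro p hp
          rw [hMadef, Finset.mem_filter] at hp
          rw [Finset.mem_erase, Finset.mem_erase]
          refine ⟨?_, ?_, hp.1⟩
          · intro h; rw [h] at hp; exact hp.2.2 rfl
          · intro h; rw [h] at hp; exact hp.2.1 rfl
        have hcard2 : ((M.erase (a, c)).erase (x, b)).card = M.card - 2 := by
          rw [Finset.card_erase_of_mem (Finset.mem_erase.2 ⟨Ne.symm hne, hx⟩),
              Finset.card_erase_of_mem hc]
          omega
        have hMc : 2 ≤ M.card := by
          have : ({(a, c), (x, b)} : Finset (A × B)) ⊆ M := by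
            intro p hp
            rcases Finset.mem_insert.1 hp with h | h
            · rw [h]; exact hc
            · rw [Finset.mem_singleton.1 h]; exact hx
          calc 2 = ({(a, c), (x, b)} : Finset (A × B)).card := by
                  rw [Finset.card_insert_of_notMem (by simpa using hne),
                    Finset.card_singleton]
            _ ≤ M.card := Finset.card_le_card this
        have h1 : M'.card ≤ Ma.card + 1 := Finset.card_insert_le _ _
        have h2 : Ma.card ≤ M.card - 2 := hcard2 ▸ Finset.card_le_card hsub
        omega
      have hlt := hbeat M' hmatch' hsmall
      have hle : P.phi M M' ≤ 2 := by
        have h1 := @card_le_one_of_subsingleton {x : A // P.prefA M M' x} hAsub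
        have h2 := @card_le_one_of_subsingleton {y : B // P.prefB M M' y} hBsub
        have := Nat.add_le_add h1 h2
        simpa [PrefSys.phi] using this
      omega
    · -- a unmatched in M: B-side of phi M M' is empty
      push_neg at ha
      have hBempty : Nat.card {y : B // P.prefB M M' y} = 0 := by
        have : IsEmpty {y : B // P.prefB M M' y} :=
          ⟨fun ⟨y, hy⟩ => ha y (hBkey y hy)⟩
        simp [Nat.card_of_isEmpty]
      have hle : P.phi M M' ≤ 1 := by
        have h1 := @card_le_one_of_subsingleton {x : A // P.prefA M M' x} hAsub
        have hphi : P.phi M M' = Nat.card {x : A // P.prefA M M' x} +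
            Nat.card {y : B // P.prefB M M' y} := rfl
        omega
      have := hpop2 M' hmatch'
      omega
  · -- b unmatched in M: A-side of phi M M' is empty
    push_neg at hb
    have hAempty : Nat.card {x : A // P.prefA M M' x} = 0 := by
      have : IsEmpty {x : A // P.prefA M M' x} :=
        ⟨fun ⟨x, hx⟩ => hb x (hAkey x hx)⟩
      simp [Nat.card_of_isEmpty]
    have hle : P.phi M M' ≤ 1 := by
      have h2 := @card_le_one_of_subsingleton {y : B // P.prefB M M' y} hBsub
      have hphi : P.phi M M' = Nat.card {x : A // P.prefA M M' x} +
          Nat.card {y : B // P.prefB M M' y} := rfl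
      omega
    have := hpop2 M' hmatch'
    omega
end

section
/- Let M be a popular matching in a bipartite graph G with strict preferences, and suppose there exists an augmenting path ρ with respect to M in the subgraph G_M. Then the matching M ⊕ ρ ties with M in a head-to-head election: φ(M ⊕ ρ, M) = φ(M, M ⊕ ρ). Consequently M is not dominant, since M ⊕ ρ is a larger matching that is not less popular than M. -/
open Classical

namespace PrefSys

variable {A B : Type} (P : PrefSys A B)

/-- Vertices of `G`, as a sum type. -/
abbrev V (A B : Type) := Sum A B

/-- Adjacency in the subgraph `G_M` (symmetrized). -/
def vAdjGM (M : Finset (A × B)) : V A B → V A B → Prop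
  | .inl a, .inr b => P.inGM M a b
  | .inr b, .inl a => P.inGM M a b
  | _, _ => False

/-- The (unordered) pair `{x,y}` is an edge of the matching `M`. -/
def vInM (M : Finset (A × B)) : V A B → V A B → Prop
  | .inl a, .inr b => (a, b) ∈ M
  | .inr b, .inl a => (a, b) ∈ M
  | _, _ => False

/-- The (unordered) pair `{x,y}` is an edge labeled `(+,+)` wrt `M`. -/
def vPlusPlus (M : Finset (A × B)) : V A B → V A B → Prop
  | .inl a, .inr b => P.Blocking M a b
  | .inr b, .inl a => P.Blocking M a b
  | _, _ => False

/-- The vertex `x` is matched in `M`. -/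
def vMatched (M : Finset (A × B)) : V A B → Prop
  | .inl a => ∃ b, (a, b) ∈ M
  | .inr b => ∃ a, (a, b) ∈ M

/-- The list of consecutive pairs of a vertex list. -/
def edgesOf (v : List (V A B)) : List (V A B × V A B) := v.zip v.tail

/-- An alternating path with respect to `M` in the subgraph `G_M`:
a list of distinct vertices, consecutive ones adjacent in `G_M`, whose edges
alternate between matching and non-matching edges. -/
def IsAltPath (M : Finset (A × B)) (v : List (V A B)) : Prop :=
  v.Nodup ∧ v.Chain' (P.vAdjGM M) ∧
  (edgesOf v).Chain' (fun e f => vInM M e.1 e.2 ↔ ¬ vInM M f.1 f.2)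

/-- An augmenting path with respect to `M` in `G_M`: an alternating path with
at least one edge, both of whose endpoints are unmatched in `M`. -/
def IsAugPath (M : Finset (A × B)) (v : List (V A B)) : Prop :=
  P.IsAltPath M v ∧ 2 ≤ v.length ∧
  (∀ x, v.head? = some x → ¬ vMatched M x) ∧
  (∀ x, v.getLast? = some x → ¬ vMatched M x)

/-- The edges of a cycle given by a vertex list (consecutive pairs plus the
closing edge from the last vertex to the first). -/
def cycEdgesOf (v : List (V A B)) : List (V A B × V A B) :=
  match v.head?, v.getLast? with
  | some x, some y => edgesOf v ++ [(y, x)]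
  | _, _ => []

/-- An alternating cycle with respect to `M` in the subgraph `G_M`. -/
def IsAltCycle (M : Finset (A × B)) (v : List (V A B)) : Prop :=
  v.Nodup ∧ 4 ≤ v.length ∧
  (∀ e ∈ cycEdgesOf v, P.vAdjGM M e.1 e.2) ∧
  (cycEdgesOf v).Chain' (fun e f => vInM M e.1 e.2 ↔ ¬ vInM M f.1 f.2)

/-- The set of `G`-edges (as pairs in `A × B`) used by a list of vertex pairs. -/
noncomputable def edgeFinset (l : List (V A B × V A B)) : Finset (A × B) :=
  (l.filterMap (fun e => match e with
    | (.inl a, .inr b) => some (a, b)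
    | (.inr b, .inl a) => some (a, b)
    | _ => none)).toFinset

/-- `M ⊕ ρ`: switch `M` along the path with vertex list `v`. -/
noncomputable def augment (M : Finset (A × B)) (v : List (V A B)) : Finset (A × B) :=
  symmDiff M (edgeFinset (edgesOf v))

end PrefSys

/-! A vertex off the augmenting path `ρ` keeps its partner in `M ⊕ ρ`, and a vertex of `ρ` is
matched in `M ⊕ ρ` along the unique edge of `ρ` at it that is not in `M`; so `M ⊕ ρ` is a matching
covering every vertex matched by `M` and the endpoints of `ρ` besides.

A vertex `x` preferring `M` to `M ⊕ ρ` votes `-` on its new edge `xy`; this edge lies in `G_M`, so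
`y` votes `+` on it, i.e. `y` prefers `M ⊕ ρ`. Since `x ↦ y` is injective,
`φ(M, M ⊕ ρ) ≤ φ(M ⊕ ρ, M)`, and popularity of `M` gives the reverse inequality. -/

namespace PrefSys

variable {A B : Type} {P : PrefSys A B} {M N : Finset (A × B)} {X Y Y' : V A B}

lemma vInM_comm : vInM N X Y ↔ vInM N Y X := by
  cases X <;> cases Y <;> exact Iff.rfl

lemma vMatched_iff_exists_vInM : vMatched N X ↔ ∃ Y, vInM N X Y := by
  cases X <;> simp [vMatched, vInM, Sum.exists]

lemma vMatched_of_vInM (h : vInM N X Y) : vMatched N X :=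
  vMatched_iff_exists_vInM.mpr ⟨Y, h⟩

lemma vInM_symmDiff :
    vInM (symmDiff M N) X Y ↔ vInM M X Y ∧ ¬ vInM N X Y ∨ vInM N X Y ∧ ¬ vInM M X Y := by
  cases X <;> cases Y <;> simp [vInM, Finset.mem_symmDiff]

lemma isLeft_ne_of_vAdjGM (h : P.vAdjGM M X Y) : X.isLeft ≠ Y.isLeft := by
  cases X <;> cases Y <;> simp_all [vAdjGM]

lemma IsMatching.vInM_unique (hM : P.IsMatching M) (h : vInM M X Y) (h' : vInM M X Y') :
    Y = Y' := by
  obtain ⟨-, hA, hB⟩ := hM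
  cases X <;> cases Y <;> cases Y' <;> simp only [vInM, Sum.inl.injEq, Sum.inr.injEq] at h h' ⊢
  · exact congrArg Prod.snd (hA _ h _ h' rfl)
  · exact congrArg Prod.fst (hB _ h _ h' rfl)

lemma isMatching_of_vInM_unique (hadj : ∀ p ∈ M, P.adj p.1 p.2)
    (huniq : ∀ X Y Y' : V A B, vInM M X Y → vInM M X Y' → Y = Y') : P.IsMatching M := by
  refine ⟨hadj, fun p hp q hq h => Prod.ext h ?_, fun p hp q hq h => Prod.ext ?_ h⟩
  · exact Sum.inr_injective (huniq (.inl p.1) (.inr p.2) (.inr q.2) hp (by rw [h]; exact hq))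
  · exact Sum.inl_injective (huniq (.inr p.2) (.inl p.1) (.inl q.1) hp (by rw [h]; exact hq))

lemma IsMatching.card_image_fst (hM : P.IsMatching M) : (M.image Prod.fst).card = M.card :=
  Finset.card_image_of_injOn fun p hp q hq h => hM.2.1 p hp q hq h

lemma IsMatching.card_image_snd (hM : P.IsMatching M) : (M.image Prod.snd).card = M.card :=
  Finset.card_image_of_injOn fun p hp q hq h => hM.2.2 p hp q hq h

lemma card_lt_card_of_vMatched (hM : P.IsMatching M) (hN : P.IsMatching N)
    (hcover : ∀ X, vMatched M X → vMatched N X) (hXN : vMatched N X) (hXM : ¬ vMatched M X) :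
    M.card < N.card := by
  cases X with
  | inl a =>
    rw [← hM.card_image_fst, ← hN.card_image_fst]
    refine Finset.card_lt_card ((Finset.ssubset_iff_of_subset ?_).mpr ⟨a, ?_, ?_⟩)
    · intro a' ha'
      simpa [vMatched] using hcover (.inl a') (by simpa [vMatched] using ha')
    · simpa [vMatched] using hXN
    · simpa [vMatched] using hXM
  | inr b =>
    rw [← hM.card_image_snd, ← hN.card_image_snd]
    refine Finset.card_lt_card ((Finset.ssubset_iff_of_subset ?_).mpr ⟨b, ?_, ?_⟩)
    · intro b' hb'
      simpa [vMatched] using hcover (.inr b') (by simpa [vMatched] using hb')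
    · simpa [vMatched] using hXN
    · simpa [vMatched] using hXM

section Votes

lemma prefB_of_prefA (hM : P.IsMatching M) {a : A} {b : B} (hab : (a, b) ∈ N)
    (hGM : (a, b) ∉ M → P.inGM M a b) (h : P.prefA M N a) : P.prefB N M b := by
  obtain ⟨b₀, hb₀, hlt⟩ := h
  have hworse := hlt b hab
  have habM : (a, b) ∉ M := fun habM => by
    cases congrArg Prod.snd (hM.2.1 _ hb₀ _ habM rfl)
    exact lt_irrefl _ hworse
  obtain ⟨-, habM' | hvoteA | hvoteB⟩ := hGM habM
  · exact absurd habM' habM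
  · exact absurd (hvoteA b₀ hb₀) (lt_asymm hworse)
  · exact ⟨a, hab, hvoteB⟩

lemma prefA_of_prefB (hM : P.IsMatching M) {a : A} {b : B} (hab : (a, b) ∈ N)
    (hGM : (a, b) ∉ M → P.inGM M a b) (h : P.prefB M N b) : P.prefA N M a := by
  obtain ⟨a₀, ha₀, hlt⟩ := h
  have hworse := hlt a hab
  have habM : (a, b) ∉ M := fun habM => by
    cases congrArg Prod.fst (hM.2.2 _ ha₀ _ habM rfl)
    exact lt_irrefl _ hworse
  obtain ⟨-, habM' | hvoteA | hvoteB⟩ := hGM habM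
  · exact absurd habM' habM
  · exact ⟨b, hab, hvoteA⟩
  · exact absurd (hvoteB a₀ ha₀) (lt_asymm hworse)

variable (hM : P.IsMatching M) (hN : P.IsMatching N)
  (hcover : ∀ X, vMatched M X → vMatched N X)
  (hGM : ∀ a b, (a, b) ∈ N → (a, b) ∉ M → P.inGM M a b)
include hM hN hcover hGM

lemma card_prefA_le_card_prefB [Finite B] :
    Nat.card {a // P.prefA M N a} ≤ Nat.card {b // P.prefB N M b} := by
  have hpartner (a : {a // P.prefA M N a}) : ∃ b, (a.1, b) ∈ N :=
    hcover (.inl a.1) (a.2.imp fun _ h => h.1)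
  choose f hf using hpartner
  refine Nat.card_le_card_of_injective
    (fun a => ⟨f a, prefB_of_prefA hM (hf a) (hGM _ _ (hf a)) a.2⟩) fun a a' h => ?_
  exact Subtype.ext (congrArg Prod.fst (hN.2.2 _ (hf a) _ (hf a') (congrArg Subtype.val h)))

lemma card_prefB_le_card_prefA [Finite A] :
    Nat.card {b // P.prefB M N b} ≤ Nat.card {a // P.prefA N M a} := by
  have hpartner (b : {b // P.prefB M N b}) : ∃ a, (a, b.1) ∈ N :=
    hcover (.inr b.1) (b.2.imp fun _ h => h.1)
  choose f hf using hpartner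
  refine Nat.card_le_card_of_injective
    (fun b => ⟨f b, prefA_of_prefB hM (hf b) (hGM _ _ (hf b)) b.2⟩) fun b b' h => ?_
  exact Subtype.ext (congrArg Prod.snd (hN.2.1 _ (hf b) _ (hf b') (congrArg Subtype.val h)))

lemma phi_le_phi_of_vMatched_of_inGM [Finite A] [Finite B] : P.phi M N ≤ P.phi N M := by
  have := card_prefA_le_card_prefB hM hN hcover hGM
  have := card_prefB_le_card_prefA hM hN hcover hGM
  unfold phi
  omega

end Votes

section Paths

variable {v : List (V A B)}

lemma mem_edgesOf_iff :
    (X, Y) ∈ edgesOf v ↔ ∃ i, ∃ h : i + 1 < v.length, v[i] = X ∧ v[i + 1] = Y := by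
  simp only [edgesOf, List.mem_iff_getElem, List.length_zip, List.length_tail, List.getElem_zip,
    List.getElem_tail, Prod.mk.injEq]
  constructor <;> rintro ⟨i, h, hXY⟩ <;> exact ⟨i, by omega, hXY⟩

lemma vInM_edgeFinset_iff {l : List (V A B × V A B)} (hl : ∀ e ∈ l, e.1.isLeft ≠ e.2.isLeft) :
    vInM (edgeFinset l) X Y ↔ (X, Y) ∈ l ∨ (Y, X) ∈ l := by
  cases X <;> cases Y <;> simp [vInM, edgeFinset, List.mem_filterMap, or_comm] <;>
    exact ⟨fun h => hl _ h rfl, fun h => hl _ h rfl⟩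

namespace IsAltPath

variable (hv : P.IsAltPath M v)
include hv

lemma vAdjGM_getElem (i : ℕ) (h : i + 1 < v.length) : P.vAdjGM M v[i] v[i + 1] :=
  List.isChain_iff_getElem.mp hv.2.1 i h

lemma vInM_iff_not_vInM (i : ℕ) (h : i + 2 < v.length) :
    vInM M v[i] v[i + 1] ↔ ¬ vInM M v[i + 1] v[i + 2] := by
  have hlen : (edgesOf v).length = v.length - 1 := by simp [edgesOf]
  have := List.isChain_iff_getElem.mp hv.2.2 i (by omega)
  simpa [edgesOf, List.getElem_zip, List.getElem_tail] using this

lemma vInM_edgeFinset_edgesOf_iff :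
    vInM (edgeFinset (edgesOf v)) X Y ↔
      ∃ i, ∃ h : i + 1 < v.length, v[i] = X ∧ v[i + 1] = Y ∨ v[i] = Y ∧ v[i + 1] = X := by
  rw [vInM_edgeFinset_iff, mem_edgesOf_iff, mem_edgesOf_iff]
  · constructor
    · rintro (⟨i, h, hXY⟩ | ⟨i, h, hYX⟩)
      exacts [⟨i, h, .inl hXY⟩, ⟨i, h, .inr hYX⟩]
    · rintro ⟨i, h, hXY | hYX⟩
      exacts [.inl ⟨i, h, hXY⟩, .inr ⟨i, h, hYX⟩]
  · rintro ⟨X, Y⟩ he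
    obtain ⟨i, h, rfl, rfl⟩ := mem_edgesOf_iff.mp he
    exact isLeft_ne_of_vAdjGM (hv.vAdjGM_getElem i h)

lemma inGM_of_mem_edgeFinset {a : A} {b : B} (h : (a, b) ∈ edgeFinset (edgesOf v)) :
    P.inGM M a b := by
  obtain ⟨i, hi, ⟨h1, h2⟩ | ⟨h1, h2⟩⟩ :=
    (hv.vInM_edgeFinset_edgesOf_iff (X := .inl a) (Y := .inr b)).mp h <;>
  · have := hv.vAdjGM_getElem i hi
    rwa [h1, h2] at this

lemma inGM_of_mem_augment {a : A} {b : B} (h : (a, b) ∈ augment M v) (hab : (a, b) ∉ M) :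
    P.inGM M a b :=
  hv.inGM_of_mem_edgeFinset ((Finset.mem_symmDiff.mp h).resolve_left fun h' => hab h'.1).1

lemma eq_of_not_vInM (hY : vInM (edgeFinset (edgesOf v)) X Y)
    (hY' : vInM (edgeFinset (edgesOf v)) X Y') (hYM : ¬ vInM M X Y) (hY'M : ¬ vInM M X Y') :
    Y = Y' := by
  rw [hv.vInM_edgeFinset_edgesOf_iff] at hY hY'
  -- Distinct path neighbours of `X` sit on either side of it, and alternation puts one of the
  -- two edges into `M`.
  obtain ⟨i, hi, ⟨rfl, rfl⟩ | ⟨rfl, rfl⟩⟩ := hY <;>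
    obtain ⟨k, hk, ⟨hki, rfl⟩ | ⟨rfl, hki⟩⟩ := hY'
  · obtain rfl := hv.1.getElem_inj_iff.mp hki
    rfl
  · obtain rfl := hv.1.getElem_inj_iff.mp hki
    have := hv.vInM_iff_not_vInM k hi
    rw [vInM_comm] at hY'M
    tauto
  · obtain rfl := hv.1.getElem_inj_iff.mp hki
    have := hv.vInM_iff_not_vInM i hk
    rw [vInM_comm] at hYM
    tauto
  · obtain rfl : k = i := Nat.succ_inj.mp (hv.1.getElem_inj_iff.mp hki)
    rfl

end IsAltPath

lemma vInM_augment_iff_of_notMem (hv : P.IsAltPath M v) (hX : X ∉ v) :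
    vInM (augment M v) X Y ↔ vInM M X Y := by
  have hXE : ¬ vInM (edgeFinset (edgesOf v)) X Y := by
    rw [hv.vInM_edgeFinset_edgesOf_iff]
    rintro ⟨i, hi, ⟨rfl, -⟩ | ⟨-, rfl⟩⟩ <;> exact hX (List.getElem_mem _)
  rw [augment, vInM_symmDiff]
  tauto

namespace IsAugPath

variable (hv : P.IsAugPath M v)
include hv

lemma not_vMatched_getElem_zero (h : 0 < v.length) : ¬ vMatched M v[0] :=
  hv.2.2.1 _ (by rw [List.head?_eq_getElem?, List.getElem?_eq_getElem h])

lemma not_vMatched_getElem_of_succ_eq_length (i : ℕ) (h : i + 1 = v.length) :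
    ¬ vMatched M v[i] :=
  hv.2.2.2 _ (by
    rw [List.getLast?_eq_getElem?, List.getElem?_eq_getElem (by omega)]
    congr
    omega)

lemma exists_getElem_eq_of_vMatched (hX : X ∈ v) (hXM : vMatched M X) :
    ∃ j, ∃ h : j + 2 < v.length, v[j + 1] = X := by
  obtain ⟨i, hi, rfl⟩ := List.mem_iff_getElem.mp hX
  obtain _ | j := i
  · exact absurd hXM (hv.not_vMatched_getElem_zero hi)
  · refine ⟨j, ?_, rfl⟩
    by_contra h
    exact hv.not_vMatched_getElem_of_succ_eq_length (j + 1) (by omega) hXM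

lemma vInM_edgeFinset_of_vInM (hM : P.IsMatching M) (hX : X ∈ v) (h : vInM M X Y) :
    vInM (edgeFinset (edgesOf v)) X Y := by
  obtain ⟨j, hj, rfl⟩ := hv.exists_getElem_eq_of_vMatched hX (vMatched_of_vInM h)
  rw [hv.1.vInM_edgeFinset_edgesOf_iff]
  by_cases hnext : vInM M v[j + 1] v[j + 2]
  · exact ⟨j + 1, hj, .inl ⟨rfl, hM.vInM_unique hnext h⟩⟩
  · have hprev := vInM_comm.mp ((hv.1.vInM_iff_not_vInM j hj).mpr hnext)
    exact ⟨j, by omega, .inr ⟨hM.vInM_unique hprev h, rfl⟩⟩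

lemma exists_vInM_edgeFinset_not_vInM (hX : X ∈ v) (hXM : vMatched M X) :
    ∃ Y, vInM (edgeFinset (edgesOf v)) X Y ∧ ¬ vInM M X Y := by
  obtain ⟨j, hj, rfl⟩ := hv.exists_getElem_eq_of_vMatched hX hXM
  simp only [hv.1.vInM_edgeFinset_edgesOf_iff]
  by_cases hnext : vInM M v[j + 1] v[j + 2]
  · refine ⟨v[j], ⟨j, by omega, .inr ⟨rfl, rfl⟩⟩, ?_⟩
    rw [vInM_comm]
    exact fun hprev => (hv.1.vInM_iff_not_vInM j hj).mp hprev hnext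
  · exact ⟨v[j + 2], ⟨j + 1, hj, .inl ⟨rfl, rfl⟩⟩, hnext⟩

lemma vInM_augment_iff_of_mem (hM : P.IsMatching M) (hX : X ∈ v) :
    vInM (augment M v) X Y ↔ vInM (edgeFinset (edgesOf v)) X Y ∧ ¬ vInM M X Y := by
  have := hv.vInM_edgeFinset_of_vInM hM hX (Y := Y)
  rw [augment, vInM_symmDiff]
  tauto

variable (hM : P.IsMatching M)
include hM

lemma isMatching_augment : P.IsMatching (augment M v) := by
  refine isMatching_of_vInM_unique (fun p hp => ?_) fun X Y Y' hY hY' => ?_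
  · rcases Finset.mem_symmDiff.mp hp with ⟨hpM, -⟩ | ⟨hpE, -⟩
    exacts [hM.1 p hpM, (hv.1.inGM_of_mem_edgeFinset hpE).1]
  · by_cases hX : X ∈ v
    · rw [hv.vInM_augment_iff_of_mem hM hX] at hY hY'
      exact hv.1.eq_of_not_vInM hY.1 hY'.1 hY.2 hY'.2
    · rw [vInM_augment_iff_of_notMem hv.1 hX] at hY hY'
      exact hM.vInM_unique hY hY'

lemma vMatched_augment (hXM : vMatched M X) : vMatched (augment M v) X := by
  rw [vMatched_iff_exists_vInM]
  by_cases hX : X ∈ v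
  · simpa only [hv.vInM_augment_iff_of_mem hM hX] using
      hv.exists_vInM_edgeFinset_not_vInM hX hXM
  · simpa only [vInM_augment_iff_of_notMem hv.1 hX] using vMatched_iff_exists_vInM.mp hXM

lemma exists_vMatched_augment_not_vMatched :
    ∃ X, vMatched (augment M v) X ∧ ¬ vMatched M X := by
  have hlen := hv.2.1
  have hfirst := hv.not_vMatched_getElem_zero (by omega)
  refine ⟨v[0], vMatched_of_vInM (Y := v[1]) ?_, hfirst⟩
  rw [hv.vInM_augment_iff_of_mem hM (List.getElem_mem _), hv.1.vInM_edgeFinset_edgesOf_iff]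
  exact ⟨⟨0, by omega, .inl ⟨rfl, rfl⟩⟩, fun h => hfirst (vMatched_of_vInM h)⟩

lemma card_lt_card_augment : M.card < (augment M v).card :=
  have ⟨_, hX, hXM⟩ := hv.exists_vMatched_augment_not_vMatched hM
  card_lt_card_of_vMatched hM (hv.isMatching_augment hM) (fun _ => hv.vMatched_augment hM) hX hXM

end IsAugPath

end Paths

end PrefSys

open PrefSys in
/-- if `M` is popular and `ρ` is an augmenting path wrt `M` in
`G_M`, then `M ⊕ ρ` ties with `M`, and consequently `M` is not dominant. -/
theorem aug_path_gives_tie {A B : Type} [Fintype A] [Fintype B]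
    (P : PrefSys A B) (M : Finset (A × B)) (hM : P.Popular M)
    (v : List (V A B)) (hv : P.IsAugPath M v) :
    P.phi (augment M v) M = P.phi M (augment M v) ∧ ¬ P.Dominant M := by
  have hM' := hv.isMatching_augment hM.1
  have htie : P.phi (augment M v) M = P.phi M (augment M v) :=
    le_antisymm (hM.2 _ hM')
      (phi_le_phi_of_vMatched_of_inGM hM.1 hM' (fun _ => hv.vMatched_augment hM.1)
        fun _ _ => hv.1.inGM_of_mem_augment)
  exact ⟨htie, fun hdom => (hdom.2 _ hM' (hv.card_lt_card_augment hM.1)).ne' htie.symm⟩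
end

section
/- Let M be a popular matching in a bipartite graph G with strict preferences such that there is no augmenting path with respect to M in the subgraph G_M. Then M is dominant: for every matching M' with |M'| > |M|, M is more popular than M'. -/
/-!
Suppose a larger matching `M'` does not lose to `M`. Berge's argument yields an `M`-augmenting
path `ρ` inside `M ∆ M'`; each vertex of `ρ` has different partners in `M` and `M'`, so by
strictness it votes `±1` between them. Comparing `M` with `M'` switched back to `M` along `ρ`
shows that the votes along `ρ` sum to at least `φ(M', M) - φ(M, M') ≥ 0`. But `ρ` is not an
augmenting path of `G_M`, so one of its `M'`-edges is labelled `(-,-)`. Cutting `ρ` there and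
switching `M` to `M'` on either half gives matchings that do not beat `M`, so each half has
vote sum `≤ 0`, hence `≤ -1` since it consists of an odd number of `±1` votes: the total is
negative, a contradiction.
-/

open Classical

lemma Finset.sum_emod_two_of_forall_eq_one_or_neg_one {ι : Type*} (s : Finset ι) (g : ι → ℤ)
    (hg : ∀ i ∈ s, g i = 1 ∨ g i = -1) : (∑ i ∈ s, g i) % 2 = s.card % 2 := by
  rw [Finset.sum_int_mod, Finset.sum_congr rfl fun i hi => show g i % 2 = 1 by
    rcases hg i hi with h | h <;> simp [h]]
  simp

namespace PrefSys

variable {A B : Type}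

section Mates

variable {N X : Finset (A × B)} {x y z : V A B}

lemma vInM_symm (h : vInM N x y) : vInM N y x := by
  cases x <;> cases y <;> simp_all [vInM]

lemma isLeft_of_vInM (h : vInM N x y) : y.isLeft = !x.isLeft := by
  cases x <;> cases y <;> simp_all [vInM]

lemma vInM_sdiff : vInM (N \ X) x y ↔ vInM N x y ∧ ¬ vInM X x y := by
  cases x <;> cases y <;> simp [vInM]

lemma vMatched_iff : vMatched N x ↔ ∃ y, vInM N x y := by
  cases x <;> simp [vMatched, vInM, Sum.exists]

def UniqueMates (N : Finset (A × B)) : Prop :=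
  ∀ ⦃x y z : V A B⦄, vInM N x y → vInM N x z → y = z

lemma vInM_mono (h : X ⊆ N) (hxy : vInM X x y) : vInM N x y := by
  cases x <;> cases y <;> simp_all [vInM] <;> exact h hxy

lemma UniqueMates.mono (hN : UniqueMates N) (h : X ⊆ N) : UniqueMates X :=
  fun _ _ _ hy hz => hN (vInM_mono h hy) (vInM_mono h hz)

lemma vInM_sdiff_of_vInM (hN : UniqueMates N) (hxy : vInM (N \ X) x y) (hxz : vInM X x z) :
    vInM (X \ N) x z := by
  rw [vInM_sdiff] at hxy ⊢
  exact ⟨hxz, fun h => hxy.2 (hN h hxy.1 ▸ hxz)⟩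

end Mates

section Walks

variable {M M' N : Finset (A × B)} {f g : ℕ → V A B} {i m m' : ℕ} {u x y : V A B}

noncomputable def altEdges (M M' : Finset (A × B)) (i : ℕ) : Finset (A × B) :=
  if i % 2 = 0 then M' \ M else M \ M'

lemma altEdges_of_even (h : i % 2 = 0) : altEdges M M' i = M' \ M := if_pos h

lemma altEdges_of_odd (h : i % 2 = 1) : altEdges M M' i = M \ M' := if_neg (by omega)

lemma altEdges_congr (h : i % 2 = m % 2) : altEdges M M' i = altEdges M M' m := by
  simp only [altEdges, h]

lemma UniqueMates.altEdges (hM : UniqueMates M) (hM' : UniqueMates M') (i : ℕ) :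
    UniqueMates (altEdges M M' i) := by
  unfold PrefSys.altEdges
  split_ifs
  · exact hM'.mono Finset.sdiff_subset
  · exact hM.mono Finset.sdiff_subset

def IsAltSeq (M M' : Finset (A × B)) (f : ℕ → V A B) (m : ℕ) : Prop :=
  ∀ i < m, vInM (altEdges M M' i) (f i) (f (i + 1))

/-- An `M`-augmenting path inside `M ∆ M'`, with `n` edges and vertices `f 0, …, f n`. -/
structure IsAugWalk (M M' : Finset (A × B)) (f : ℕ → V A B) (n : ℕ) : Prop where
  isAltSeq : IsAltSeq M M' f n
  odd : n % 2 = 1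
  head_free : ¬ vMatched M (f 0)
  last_free : ¬ vMatched M (f n)

lemma IsAltSeq.mono (hf : IsAltSeq M M' f m) (h : m' ≤ m) : IsAltSeq M M' f m' :=
  fun i hi => hf i (by omega)

lemma IsAltSeq.isLeft_iff (hf : IsAltSeq M M' f m) (hi : i ≤ m) :
    (f i).isLeft = (f 0).isLeft ↔ i % 2 = 0 := by
  induction i with
  | zero => simp
  | succ i ih =>
    have ih := ih (by omega)
    rw [isLeft_of_vInM (hf i (by omega)), show (i + 1) % 2 = 0 ↔ ¬ i % 2 = 0 by omega, ← ih]
    cases (f i).isLeft <;> cases (f 0).isLeft <;> decide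

lemma IsAltSeq.eq_of_last_eq (hM : UniqueMates M) (hM' : UniqueMates M')
    (hf : IsAltSeq M M' f m) (hg : IsAltSeq M M' g m') (hlast : f m = g m')
    (hpar : m % 2 = m' % 2) {j : ℕ} (hj : j ≤ m) (hj' : j ≤ m') :
    f (m - j) = g (m' - j) := by
  induction j with
  | zero => simpa using hlast
  | succ j ih =>
    have hfj := vInM_symm (hf (m - j - 1) (by omega))
    have hgj := vInM_symm (hg (m' - j - 1) (by omega))
    rw [show m - j - 1 + 1 = m - j by omega, ih (by omega) (by omega)] at hfj
    rw [show m' - j - 1 + 1 = m' - j by omega, altEdges_congr (show _ = (m - j - 1) % 2 by omega)]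
      at hgj
    exact hM.altEdges hM' _ hfj hgj

/-- Running the longer walk backwards would reach the `M`-free vertex `f 0` through an
`M`-edge. -/
lemma IsAltSeq.length_eq_of_last_eq (hM : UniqueMates M) (hM' : UniqueMates M')
    (hf : IsAltSeq M M' f m) (hg : IsAltSeq M M' g m') (hlast : f m = g m')
    (hpar : m % 2 = m' % 2) (h0 : ¬ vMatched M (f 0)) (hle : m ≤ m') : m = m' := by
  by_contra hne
  have h := hf.eq_of_last_eq hM hM' hg hlast hpar le_rfl hle
  have hstep := hg (m' - m - 1) (by omega)
  rw [altEdges_of_odd (by omega), vInM_sdiff, show m' - m - 1 + 1 = m' - m by omega] at hstep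
  rw [Nat.sub_self] at h
  exact h0 (vMatched_iff.2 ⟨_, h ▸ vInM_symm hstep.1⟩)

lemma IsAltSeq.injOn (hM : UniqueMates M) (hM' : UniqueMates M') (hf : IsAltSeq M M' f m)
    (h0 : ¬ vMatched M (f 0)) {j : ℕ} (hi : i ≤ m) (hj : j ≤ m) (h : f i = f j) : i = j := by
  have hside := (hf.isLeft_iff hi).symm.trans (h ▸ hf.isLeft_iff hj)
  have hpar : i % 2 = j % 2 := by omega
  rcases le_total i j with hij | hij
  · exact (hf.mono hi).length_eq_of_last_eq hM hM' (hf.mono hj) h hpar h0 hij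
  · exact ((hf.mono hj).length_eq_of_last_eq hM hM' (hf.mono hi) h.symm hpar.symm h0 hij).symm

lemma IsAltSeq.vInM_iff (hf : IsAltSeq M M' f m) (hi : i < m) :
    vInM M (f i) (f (i + 1)) ↔ i % 2 = 1 := by
  have hs := hf i hi
  rcases Nat.mod_two_eq_zero_or_one i with h | h
  · rw [altEdges_of_even h, vInM_sdiff] at hs
    simp [hs.2, h]
  · rw [altEdges_of_odd h, vInM_sdiff] at hs
    simp [hs.1, h]

/-- The `N`-partner of `x`, with junk value `x` if there is none. -/
noncomputable def mate (N : Finset (A × B)) (x : V A B) : V A B :=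
  if h : ∃ y, vInM N x y then h.choose else x

lemma vInM_mate (h : vInM N x y) : vInM N x (mate N x) := by
  have hex : ∃ y, vInM N x y := ⟨y, h⟩
  rw [mate, dif_pos hex]
  exact hex.choose_spec

noncomputable def altSeq (M M' : Finset (A × B)) (u : V A B) : ℕ → V A B
  | 0 => u
  | i + 1 => mate (altEdges M M' i) (altSeq M M' u i)

lemma exists_isAltSeq_stuck [Finite A] [Finite B] (hM : UniqueMates M) (hM' : UniqueMates M')
    (hu : ¬ vMatched M u) :
    ∃ m, IsAltSeq M M' (altSeq M M' u) m ∧ ¬ vMatched (altEdges M M' m) (altSeq M M' u m) := by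
  by_contra! h
  have hall : ∀ m, IsAltSeq M M' (altSeq M M' u) m := by
    intro m
    induction m with
    | zero => intro i hi; omega
    | succ m ih =>
      intro i hi
      rcases Nat.lt_succ_iff_lt_or_eq.1 hi with hi | rfl
      · exact ih i hi
      · obtain ⟨y, hy⟩ := vMatched_iff.1 (h i ih)
        exact vInM_mate hy
  exact not_injective_infinite_finite _ fun i j hij =>
    (hall (max i j)).injOn hM hM' hu (le_max_left _ _) (le_max_right _ _) hij

noncomputable def verts (N : Finset (A × B)) : Finset (V A B) :=
  N.image (fun p => .inl p.1) ∪ N.image (fun p => .inr p.2)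

lemma mem_verts : x ∈ verts N ↔ vMatched N x := by
  cases x <;> simp [verts, vMatched]

lemma card_verts (hN : UniqueMates N) : (verts N).card = 2 * N.card := by
  rw [verts, Finset.card_union_of_disjoint (Finset.disjoint_left.2 (by simp)),
    Finset.card_image_of_injOn, Finset.card_image_of_injOn, two_mul]
  · rintro ⟨a, b⟩ hp ⟨a', b'⟩ hq h
    simp only [Sum.inr.injEq] at h
    subst h
    simpa using hN (x := .inr b) (y := .inl a) (z := .inl a') hp hq
  · rintro ⟨a, b⟩ hp ⟨a', b'⟩ hq h
    simp only [Sum.inl.injEq] at h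
    subst h
    simpa using hN (x := .inl a) (y := .inr b) (z := .inr b') hp hq

lemma altSeq_augments_or_ends [Finite A] [Finite B] (hM : UniqueMates M) (hM' : UniqueMates M')
    (hu : ¬ vMatched M u) (hu' : vMatched M' u) :
    (∃ n, IsAugWalk M M' (altSeq M M' u) n) ∨
      ∃ m, m % 2 = 0 ∧ IsAltSeq M M' (altSeq M M' u) m ∧
        altSeq M M' u m ∈ verts M \ verts M' := by
  obtain ⟨m, hf, hstuck⟩ := exists_isAltSeq_stuck hM hM' hu
  have hm : m ≠ 0 := by
    rintro rfl
    obtain ⟨y, hy⟩ := vMatched_iff.1 hu'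
    refine hstuck (vMatched_iff.2 ⟨y, ?_⟩)
    rw [altEdges_of_even rfl, vInM_sdiff]
    exact ⟨hy, fun h => hu (vMatched_iff.2 ⟨y, h⟩)⟩
  have hlast := vInM_symm (hf (m - 1) (by omega))
  rw [Nat.sub_add_cancel (by omega)] at hlast
  rcases Nat.mod_two_eq_zero_or_one m with hev | hodd
  · right
    rw [altEdges_of_odd (by omega)] at hlast
    rw [altEdges_of_even hev] at hstuck
    refine ⟨m, hev, hf, Finset.mem_sdiff.2
      ⟨mem_verts.2 (vMatched_iff.2 ⟨_, (vInM_sdiff.1 hlast).1⟩), fun h => ?_⟩⟩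
    obtain ⟨z, hz⟩ := vMatched_iff.1 (mem_verts.1 h)
    exact hstuck (vMatched_iff.2 ⟨z, vInM_sdiff_of_vInM hM hlast hz⟩)
  · left
    rw [altEdges_of_even (by omega)] at hlast
    rw [altEdges_of_odd hodd] at hstuck
    refine ⟨m, hf, hodd, hu, fun h => ?_⟩
    obtain ⟨z, hz⟩ := vMatched_iff.1 h
    exact hstuck (vMatched_iff.2 ⟨z, vInM_sdiff_of_vInM hM' hlast hz⟩)

/-- Berge's counting argument: the greedy walks from the vertices matched only in `M'` end at
distinct vertices (run them backwards), so they cannot all end at the fewer vertices matched only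
in `M`. -/
theorem exists_isAugWalk [Finite A] [Finite B] (hM : UniqueMates M) (hM' : UniqueMates M')
    (hcard : M.card < M'.card) : ∃ f n, IsAugWalk M M' f n := by
  by_contra! hno
  have hend : ∀ u ∈ verts M' \ verts M, ∃ m, m % 2 = 0 ∧ IsAltSeq M M' (altSeq M M' u) m ∧
      altSeq M M' u m ∈ verts M \ verts M' := by
    intro u hu
    rw [Finset.mem_sdiff, mem_verts, mem_verts] at hu
    exact (altSeq_augments_or_ends hM hM' hu.2 hu.1).resolve_left fun ⟨n, hn⟩ => hno _ _ hn
  choose! m hm_even hm_seq hm_mem using hend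
  have hinj : Set.InjOn (fun u => altSeq M M' u (m u)) (verts M' \ verts M : Finset _) := by
    intro u hu u' hu' h
    have hfree : ∀ v ∈ verts M' \ verts M, ¬ vMatched M (altSeq M M' v 0) :=
      fun v hv h => (Finset.mem_sdiff.1 hv).2 (mem_verts.2 h)
    have hlen : m u = m u' := by
      rcases le_total (m u) (m u') with hle | hle
      · exact (hm_seq u hu).length_eq_of_last_eq hM hM' (hm_seq u' hu') h
          (by rw [hm_even u hu, hm_even u' hu']) (hfree u hu) hle
      · exact ((hm_seq u' hu').length_eq_of_last_eq hM hM' (hm_seq u hu) h.symm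
          (by rw [hm_even u hu, hm_even u' hu']) (hfree u' hu') hle).symm
    have := (hm_seq u hu).eq_of_last_eq hM hM' (hm_seq u' hu') h
      (by rw [hm_even u hu, hm_even u' hu']) le_rfl hlen.le
    simpa [hlen, altSeq] using this
  have hle := Finset.card_le_card_of_injOn _ hm_mem hinj
  have h1 := Finset.card_sdiff_add_card_inter (verts M') (verts M)
  have h2 := Finset.card_sdiff_add_card_inter (verts M) (verts M')
  rw [Finset.inter_comm, card_verts hM] at h2
  rw [card_verts hM'] at h1
  omega

end Walks

section Votes

variable (P : PrefSys A B)

def vRank : V A B → V A B → ℕ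
  | .inl a, .inr b => P.rankA a b
  | .inr b, .inl a => P.rankB b a
  | _, _ => 0

/-- `x` votes `+` on the edge `xy` against its `M`-partner. -/
def vPlus (M : Finset (A × B)) (x y : V A B) : Prop :=
  ∀ z, vInM M x z → P.vRank x y < P.vRank x z

def vPref (N M : Finset (A × B)) (x : V A B) : Prop :=
  ∃ y, vInM N x y ∧ P.vPlus M x y

noncomputable def vote (N M : Finset (A × B)) (x : V A B) : ℤ :=
  (if P.vPref N M x then 1 else 0) - (if P.vPref M N x then 1 else 0)

variable {P} {M N N₁ N₂ : Finset (A × B)} {x y z : V A B} {a : A} {b : B}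

lemma vPlus_inl_inr : P.vPlus M (.inl a) (.inr b) ↔ P.voteAplus M a b := by
  simp [vPlus, voteAplus, vInM, vRank, Sum.forall]

lemma vPlus_inr_inl : P.vPlus M (.inr b) (.inl a) ↔ P.voteBplus M a b := by
  simp [vPlus, voteBplus, vInM, vRank, Sum.forall]

lemma vPref_inl : P.vPref N M (.inl a) ↔ P.prefA N M a := by
  simp [vPref, prefA, vInM, Sum.exists, vPlus_inl_inr, voteAplus]

lemma vPref_inr : P.vPref N M (.inr b) ↔ P.prefB N M b := by
  simp [vPref, prefB, vInM, Sum.exists, vPlus_inr_inl, voteBplus]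

lemma IsMatching.uniqueMates (hN : P.IsMatching N) : UniqueMates N := by
  intro x y z hy hz
  rcases x with a | b <;> rcases y with a' | b' <;> rcases z with a'' | b'' <;>
    simp only [vInM] at hy hz
  · simpa using hN.2.1 _ hy _ hz rfl
  · simpa using hN.2.2 _ hy _ hz rfl

lemma vRank_inj (hN : P.IsMatching N) (hM : P.IsMatching M) (hy : vInM N x y) (hz : vInM M x z)
    (h : P.vRank x y = P.vRank x z) : y = z := by
  rcases x with a | b <;> rcases y with a' | b' <;> rcases z with a'' | b'' <;>
    simp only [vInM] at hy hz
  · exact congrArg _ (P.rankA_inj a b' b'' (hN.1 _ hy) (hM.1 _ hz) h)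
  · exact congrArg _ (P.rankB_inj b a' a'' (hN.1 _ hy) (hM.1 _ hz) h)

lemma phi_eq_sum [Fintype A] [Fintype B] (N M : Finset (A × B)) :
    (P.phi N M : ℤ) = ∑ x, if P.vPref N M x then 1 else 0 := by
  rw [phi, Nat.card_eq_fintype_card, Nat.card_eq_fintype_card, Fintype.card_subtype,
    Fintype.card_subtype, Finset.card_filter, Finset.card_filter, Fintype.sum_sum_type]
  push_cast
  simp [vPref_inl, vPref_inr]

lemma phi_sub_phi [Fintype A] [Fintype B] (N M : Finset (A × B)) :
    (P.phi N M : ℤ) - P.phi M N = ∑ x, P.vote N M x := by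
  simp only [phi_eq_sum, vote, Finset.sum_sub_distrib]

lemma Popular.sum_vote_nonpos [Fintype A] [Fintype B] (hM : P.Popular M) (hN : P.IsMatching N) :
    ∑ x, P.vote N M x ≤ 0 := by
  rw [← phi_sub_phi, sub_nonpos]
  exact_mod_cast hM.2 N hN

lemma vPref_asymm (h : P.vPref N M x) : ¬ P.vPref M N x := by
  rintro ⟨z, hz, hzy⟩
  obtain ⟨y, hy, hyz⟩ := h
  exact lt_asymm (hyz z hz) (hzy y hy)

lemma vote_eq_one_of_vPref (h : P.vPref N M x) : P.vote N M x = 1 := by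
  simp [vote, h, vPref_asymm h]

lemma vote_eq_neg_one_of_vPref (h : P.vPref M N x) : P.vote N M x = -1 := by
  simp [vote, h, vPref_asymm h]

lemma vPref_of_vote_eq_one (h : P.vote N M x = 1) : P.vPref N M x := by
  by_contra hn
  simp only [vote, hn] at h
  split_ifs at h <;> omega

lemma vMatched_of_vote_eq_neg_one (h : P.vote N M x = -1) : vMatched M x := by
  by_contra hn
  have : ¬ P.vPref M N x := fun ⟨y, hy, _⟩ => hn (vMatched_iff.2 ⟨y, hy⟩)
  simp only [vote, this] at h
  split_ifs at h <;> omega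

lemma vote_self : P.vote M M x = 0 := sub_self _

lemma vote_congr (h : ∀ y, vInM N₁ x y ↔ vInM N₂ x y) :
    P.vote N₁ M x = P.vote N₂ M x := by
  have h₁ : P.vPref N₁ M x ↔ P.vPref N₂ M x := by simp only [vPref, h]
  have h₂ : P.vPref M N₁ x ↔ P.vPref M N₂ x := by simp only [vPref, vPlus, h]
  simp only [vote, h₁, h₂]

lemma vote_eq_neg_one_of_not_vMatched (hN : ¬ vMatched N x) (hM : vMatched M x) :
    P.vote N M x = -1 := by
  obtain ⟨y, hy⟩ := vMatched_iff.1 hM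
  exact vote_eq_neg_one_of_vPref ⟨y, hy, fun z hz => absurd (vMatched_iff.2 ⟨z, hz⟩) hN⟩

lemma vote_eq_one_or_neg_one (hN : P.IsMatching N) (hM : P.IsMatching M) (hxy : vInM N x y)
    (hxy' : ¬ vInM M x y) : P.vote N M x = 1 ∨ P.vote N M x = -1 := by
  by_cases hx : vMatched M x
  · obtain ⟨z, hz⟩ := vMatched_iff.1 hx
    have hne : P.vRank x y ≠ P.vRank x z := fun h => hxy' (vRank_inj hN hM hxy hz h ▸ hz)
    rcases hne.lt_or_gt with hlt | hgt
    · exact .inl <| vote_eq_one_of_vPref ⟨y, hxy, fun z' hz' => hM.uniqueMates hz hz' ▸ hlt⟩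
    · exact .inr <| vote_eq_neg_one_of_vPref
        ⟨z, hz, fun y' hy' => hN.uniqueMates hxy hy' ▸ hgt⟩
  · exact .inl <| vote_eq_one_of_vPref
      ⟨y, hxy, fun z hz => absurd (vMatched_iff.2 ⟨z, hz⟩) hx⟩

lemma vPlus_of_vote_eq_one (hN : UniqueMates N) (hxy : vInM N x y) (h : P.vote N M x = 1) :
    P.vPlus M x y := by
  obtain ⟨y', hy', hplus⟩ := vPref_of_vote_eq_one h
  exact hN hy' hxy ▸ hplus

lemma vAdjGM_of_vInM (hM : P.IsMatching M) (h : vInM M x y) : P.vAdjGM M x y := by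
  rcases x with a | b <;> rcases y with a' | b' <;> simp only [vInM] at h
  · exact (⟨hM.1 _ h, .inl h⟩ : P.inGM M a b')
  · exact (⟨hM.1 _ h, .inl h⟩ : P.inGM M a' b)

lemma vAdjGM_of_vPlus (hN : P.IsMatching N) (h : vInM N x y)
    (hplus : P.vPlus M x y ∨ P.vPlus M y x) : P.vAdjGM M x y := by
  rcases x with a | b <;> rcases y with a' | b' <;> simp only [vInM] at h
  · rw [vPlus_inl_inr, vPlus_inr_inl] at hplus
    exact (⟨hN.1 _ h, .inr hplus⟩ : P.inGM M a b')
  · rw [vPlus_inr_inl, vPlus_inl_inr] at hplus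
    exact (⟨hN.1 _ h, .inr hplus.symm⟩ : P.inGM M a' b)

section Mix

variable {X Y M' : Finset (A × B)} {S : Finset (V A B)}

/-- `X` on the vertex set `S`, and `Y` off it. -/
noncomputable def mix (X Y : Finset (A × B)) (S : Finset (V A B)) : Finset (A × B) :=
  X.filter (fun p => .inl p.1 ∈ S ∧ .inr p.2 ∈ S) ∪
    Y.filter (fun p => .inl p.1 ∉ S ∧ .inr p.2 ∉ S)

lemma vInM_mix : vInM (mix X Y S) x y ↔
    vInM X x y ∧ x ∈ S ∧ y ∈ S ∨ vInM Y x y ∧ x ∉ S ∧ y ∉ S := by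
  cases x <;> cases y <;> simp [vInM, mix, and_comm]

lemma isMatching_mix (hX : P.IsMatching X) (hY : P.IsMatching Y) : P.IsMatching (mix X Y S) := by
  simp only [IsMatching, mix, Finset.mem_union, Finset.mem_filter]
  refine ⟨?_, ?_, ?_⟩
  · rintro p (⟨hp, -⟩ | ⟨hp, -⟩)
    exacts [hX.1 p hp, hY.1 p hp]
  · rintro p (⟨hp, hpS, -⟩ | ⟨hp, hpS, -⟩) q (⟨hq, hqS, -⟩ | ⟨hq, hqS, -⟩) h <;>
      rw [h] at hpS
    exacts [hX.2.1 p hp q hq h, absurd hpS hqS, absurd hqS hpS, hY.2.1 p hp q hq h]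
  · rintro p (⟨hp, -, hpS⟩ | ⟨hp, -, hpS⟩) q (⟨hq, -, hqS⟩ | ⟨hq, -, hqS⟩) h <;>
      rw [h] at hpS
    exacts [hX.2.2 p hp q hq h, absurd hpS hqS, absurd hqS hpS, hY.2.2 p hp q hq h]

def MateClosed (N : Finset (A × B)) (S : Finset (V A B)) : Prop :=
  ∀ ⦃x y⦄, vInM N x y → x ∈ S → y ∈ S

lemma vInM_mix_of_mem (hx : x ∈ S) (hX : ∀ y, vInM X x y → y ∈ S) :
    vInM (mix X Y S) x y ↔ vInM X x y := by
  rw [vInM_mix]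
  exact ⟨fun h => h.elim And.left fun h => absurd hx h.2.1, fun h => .inl ⟨h, hx, hX y h⟩⟩

lemma vInM_mix_of_not_mem (hx : x ∉ S) (hY : MateClosed Y S) :
    vInM (mix X Y S) x y ↔ vInM Y x y := by
  rw [vInM_mix]
  exact ⟨fun h => h.elim (fun h => absurd h.2.1 hx) And.left,
    fun h => .inr ⟨h, hx, fun hy => hx (hY (vInM_symm h) hy)⟩⟩

/-- A vertex of `S` cut off from its `M'`-partner is unmatched in the mix, so it votes `-1` there,
just as it does between `M'` and `M`. -/
lemma sum_vote_mix [Fintype A] [Fintype B] (hM' : UniqueMates M') (hS : MateClosed M S)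
    (hbd : ∀ x ∈ S, (∀ y, vInM M' x y → y ∈ S) ∨ P.vote M' M x = -1) :
    ∑ x, P.vote (mix M' M S) M x = ∑ x ∈ S, P.vote M' M x := by
  rw [← Finset.sum_add_sum_compl S, add_eq_left.2 (Finset.sum_eq_zero fun x hx =>
    (vote_congr fun _ => vInM_mix_of_not_mem (Finset.mem_compl.1 hx) hS).trans vote_self)]
  refine Finset.sum_congr rfl fun x hx => ?_
  by_cases hin : ∀ y, vInM M' x y → y ∈ S
  · exact vote_congr fun _ => vInM_mix_of_mem hx hin
  simp only [not_forall, exists_prop] at hin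
  obtain ⟨y₀, hy₀, hy₀S⟩ := hin
  have hneg := (hbd x hx).resolve_left fun h => hy₀S (h y₀ hy₀)
  rw [hneg]
  refine vote_eq_neg_one_of_not_vMatched (fun hm => ?_) (vMatched_of_vote_eq_neg_one hneg)
  obtain ⟨y, hy⟩ := vMatched_iff.1 hm
  rcases vInM_mix.1 hy with ⟨hy, -, hyS⟩ | ⟨-, hxS, -⟩
  exacts [hy₀S (hM' hy hy₀ ▸ hyS), hxS hx]

lemma sum_vote_mix_swap [Fintype A] [Fintype B] (hS : MateClosed M S) (hS' : MateClosed M' S) :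
    ∑ x, P.vote (mix M M' S) M x = ∑ x, P.vote M' M x - ∑ x ∈ S, P.vote M' M x := by
  rw [← Finset.sum_add_sum_compl S (P.vote (mix M M' S) M),
    ← Finset.sum_add_sum_compl S (P.vote M' M),
    Finset.sum_eq_zero fun x hx =>
      (vote_congr fun _ => vInM_mix_of_mem hx fun _ h => hS h hx).trans vote_self,
    Finset.sum_congr rfl fun x hx =>
      vote_congr fun _ => vInM_mix_of_not_mem (Finset.mem_compl.1 hx) hS']
  ring

end Mix

end Votes

namespace IsAugWalk

variable {P : PrefSys A B} {M M' : Finset (A × B)} {f : ℕ → V A B} {n a b i : ℕ} {y : V A B}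

lemma exists_vInM_sdiff (hw : IsAugWalk M M' f n) (hi : i ≤ n) :
    ∃ y, vInM (M' \ M) (f i) y := by
  have := hw.odd
  rcases Nat.mod_two_eq_zero_or_one i with h | h
  · have hs := hw.isAltSeq i (by omega)
    rw [altEdges_of_even h] at hs
    exact ⟨_, hs⟩
  · have hs := hw.isAltSeq (i - 1) (by omega)
    rw [altEdges_of_even (by omega), Nat.sub_add_cancel (by omega)] at hs
    exact ⟨_, vInM_symm hs⟩

lemma eq_of_vInM' (hM' : UniqueMates M') (hw : IsAugWalk M M' f n) (hi : i ≤ n)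
    (hy : vInM M' (f i) y) : i % 2 = 0 ∧ y = f (i + 1) ∨ i % 2 = 1 ∧ y = f (i - 1) := by
  have := hw.odd
  rcases Nat.mod_two_eq_zero_or_one i with h | h
  · have hs := hw.isAltSeq i (by omega)
    rw [altEdges_of_even h, vInM_sdiff] at hs
    exact .inl ⟨h, hM' hy hs.1⟩
  · have hs := hw.isAltSeq (i - 1) (by omega)
    rw [altEdges_of_even (by omega), vInM_sdiff, Nat.sub_add_cancel (by omega)] at hs
    exact .inr ⟨h, hM' hy (vInM_symm hs.1)⟩

lemma eq_of_vInM (hM : UniqueMates M) (hw : IsAugWalk M M' f n) (hi : i ≤ n)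
    (hy : vInM M (f i) y) :
    i % 2 = 1 ∧ i < n ∧ y = f (i + 1) ∨ i % 2 = 0 ∧ 0 < i ∧ y = f (i - 1) := by
  have hi0 : i ≠ 0 := by rintro rfl; exact hw.head_free (vMatched_iff.2 ⟨y, hy⟩)
  have hin : i ≠ n := by rintro rfl; exact hw.last_free (vMatched_iff.2 ⟨y, hy⟩)
  rcases Nat.mod_two_eq_zero_or_one i with h | h
  · have hs := hw.isAltSeq (i - 1) (by omega)
    rw [altEdges_of_odd (by omega), vInM_sdiff, Nat.sub_add_cancel (by omega)] at hs
    exact .inr ⟨h, by omega, hM hy (vInM_symm hs.1)⟩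
  · have hs := hw.isAltSeq i (by omega)
    rw [altEdges_of_odd h, vInM_sdiff] at hs
    exact .inl ⟨h, by omega, hM hy hs.1⟩

lemma mateClosed (hM : UniqueMates M) (hw : IsAugWalk M M' f n) (ha : a = 0 ∨ a % 2 = 1)
    (hb : b = n + 1 ∨ b % 2 = 1) (hbn : b ≤ n + 1) :
    MateClosed M ((Finset.Ico a b).image f) := by
  intro x y hxy hx
  obtain ⟨i, hi, rfl⟩ := Finset.mem_image.1 hx
  rw [Finset.mem_Ico] at hi
  rcases hw.eq_of_vInM hM (by omega) hxy with ⟨_, _, rfl⟩ | ⟨_, _, rfl⟩ <;>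
    exact Finset.mem_image_of_mem f (Finset.mem_Ico.2 (by omega))

lemma mateClosed' (hM' : UniqueMates M') (hw : IsAugWalk M M' f n) :
    MateClosed M' ((Finset.Ico 0 (n + 1)).image f) := by
  intro x y hxy hx
  obtain ⟨i, hi, rfl⟩ := Finset.mem_image.1 hx
  rw [Finset.mem_Ico] at hi
  rcases hw.eq_of_vInM' hM' (by omega) hxy with ⟨_, rfl⟩ | ⟨_, rfl⟩ <;>
    exact Finset.mem_image_of_mem f (Finset.mem_Ico.2 (by have := hw.odd; omega))

lemma sum_image_Ico (hM : UniqueMates M) (hM' : UniqueMates M') (hw : IsAugWalk M M' f n)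
    (hbn : b ≤ n + 1) (g : V A B → ℤ) :
    ∑ x ∈ (Finset.Ico a b).image f, g x = ∑ i ∈ Finset.Ico a b, g (f i) := by
  refine Finset.sum_image fun i hi j hj h => hw.isAltSeq.injOn hM hM' hw.head_free ?_ ?_ h <;>
    simp only [Finset.coe_Ico, Set.mem_Ico] at hi hj <;> omega

lemma vote_eq_one_or_neg_one (hM : P.IsMatching M) (hM' : P.IsMatching M')
    (hw : IsAugWalk M M' f n) (hi : i ≤ n) :
    P.vote M' M (f i) = 1 ∨ P.vote M' M (f i) = -1 := by
  obtain ⟨y, hy⟩ := hw.exists_vInM_sdiff hi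
  rw [vInM_sdiff] at hy
  exact PrefSys.vote_eq_one_or_neg_one hM' hM hy.1 hy.2

lemma sum_vote_emod_two (hM : P.IsMatching M) (hM' : P.IsMatching M') (hw : IsAugWalk M M' f n)
    (hbn : b ≤ n + 1) :
    (∑ i ∈ Finset.Ico a b, P.vote M' M (f i)) % 2 = ((b - a : ℕ) : ℤ) % 2 := by
  rw [Finset.sum_emod_two_of_forall_eq_one_or_neg_one _ _ fun i hi =>
    hw.vote_eq_one_or_neg_one hM hM' (by rw [Finset.mem_Ico] at hi; omega), Nat.card_Ico]

/-- Compare `M` with `M'` switched back to `M` along the walk. -/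
lemma sum_vote_le [Fintype A] [Fintype B] (hM : P.Popular M) (hM' : P.IsMatching M')
    (hw : IsAugWalk M M' f n) :
    ∑ x, P.vote M' M x ≤ ∑ i ∈ Finset.Ico 0 (n + 1), P.vote M' M (f i) := by
  have hMu := hM.1.uniqueMates
  have hM'u := hM'.uniqueMates
  have h := hM.sum_vote_nonpos (isMatching_mix (S := (Finset.Ico 0 (n + 1)).image f) hM.1 hM')
  rw [sum_vote_mix_swap (hw.mateClosed hMu (.inl rfl) (.inl rfl) le_rfl) (hw.mateClosed' hM'u),
    hw.sum_image_Ico hMu hM'u le_rfl] at h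
  linarith

/-- Compare `M` with `M` switched to `M'` on the segment `f a, …, f (b - 1)` of the walk. -/
lemma sum_vote_Ico_nonpos [Fintype A] [Fintype B] (hM : P.Popular M) (hM' : P.IsMatching M')
    (hw : IsAugWalk M M' f n) (hbn : b ≤ n + 1)
    (ha : a = 0 ∨ a % 2 = 1 ∧ P.vote M' M (f a) = -1)
    (hb : b = n + 1 ∨ b % 2 = 1 ∧ P.vote M' M (f (b - 1)) = -1) :
    ∑ i ∈ Finset.Ico a b, P.vote M' M (f i) ≤ 0 := by
  have hMu := hM.1.uniqueMates
  have hM'u := hM'.uniqueMates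
  have := hw.odd
  rw [← hw.sum_image_Ico hMu hM'u hbn, ← sum_vote_mix hM'u
    (hw.mateClosed hMu (ha.imp_right And.left) (hb.imp_right And.left) hbn)]
  · exact hM.sum_vote_nonpos (isMatching_mix hM' hM.1)
  rintro _ hx
  obtain ⟨i, hi, rfl⟩ := Finset.mem_image.1 hx
  rw [Finset.mem_Ico] at hi
  by_cases hend : a % 2 = 1 ∧ i = a ∨ b % 2 = 1 ∧ i + 1 = b
  · right
    rcases hend with ⟨h, rfl⟩ | ⟨h, rfl⟩
    · exact (ha.resolve_left (by omega)).2
    · simpa using (hb.resolve_left (by omega)).2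
  · left
    intro y hy
    rcases hw.eq_of_vInM' hM'u (by omega) hy with ⟨_, rfl⟩ | ⟨_, rfl⟩ <;>
      exact Finset.mem_image_of_mem f (Finset.mem_Ico.2 (by omega))

lemma isAugPath (hM : UniqueMates M) (hM' : UniqueMates M') (hw : IsAugWalk M M' f n)
    (hG : ∀ i < n, P.vAdjGM M (f i) (f (i + 1))) :
    P.IsAugPath M ((List.range (n + 1)).map f) := by
  have hedges : edgesOf ((List.range (n + 1)).map f) =
      (List.range n).map fun i => (f i, f (i + 1)) := by
    apply List.ext_getElem <;> simp [edgesOf]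
  refine ⟨⟨?_, ?_, ?_⟩, ?_, ?_, ?_⟩
  · refine List.nodup_range.map_on fun i hi j hj h =>
      hw.isAltSeq.injOn hM hM' hw.head_free ?_ ?_ h <;> rw [List.mem_range] at hi hj <;> omega
  · exact (List.isChain_map f).2 ((List.isChain_range_succ _ n).2 hG)
  · rw [hedges]
    refine (List.isChain_map _).2 ((List.isChain_range _ n).2 fun i hi => ?_)
    rw [hw.isAltSeq.vInM_iff (by omega), hw.isAltSeq.vInM_iff (by omega)]
    omega
  · rw [List.length_map, List.length_range]
    have := hw.odd
    omega
  · simpa [List.range_succ_eq_map] using hw.head_free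
  · simpa [List.range_succ] using hw.last_free

lemma exists_vote_eq_neg_one (hM : P.IsMatching M) (hM' : P.IsMatching M')
    (hw : IsAugWalk M M' f n) (hno : ¬ ∃ v, P.IsAugPath M v) :
    ∃ k, 2 * k < n ∧ P.vote M' M (f (2 * k)) = -1 ∧ P.vote M' M (f (2 * k + 1)) = -1 := by
  by_contra! h
  refine hno ⟨_, hw.isAugPath hM.uniqueMates hM'.uniqueMates fun i hi => ?_⟩
  have hs := hw.isAltSeq i hi
  rcases Nat.mod_two_eq_zero_or_one i with hev | hodd
  · rw [altEdges_of_even hev, vInM_sdiff] at hs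
    obtain ⟨k, rfl⟩ : ∃ k, i = 2 * k := ⟨i / 2, by omega⟩
    refine vAdjGM_of_vPlus hM' hs.1 ?_
    rcases hw.vote_eq_one_or_neg_one hM hM' (i := 2 * k) (by omega) with h₁ | h₁
    · exact .inl (vPlus_of_vote_eq_one hM'.uniqueMates hs.1 h₁)
    rcases hw.vote_eq_one_or_neg_one hM hM' (i := 2 * k + 1) (by omega) with h₂ | h₂
    · exact .inr (vPlus_of_vote_eq_one hM'.uniqueMates (vInM_symm hs.1) h₂)
    · exact absurd h₂ (h k hi h₁)
  · rw [altEdges_of_odd hodd, vInM_sdiff] at hs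
    exact vAdjGM_of_vInM hM hs.1

end IsAugWalk

end PrefSys

open PrefSys in
/-- a popular matching with no augmenting path in `G_M` is
dominant: it is more popular than every matching of strictly larger size. -/
theorem no_aug_path_implies_dominant {A B : Type} [Fintype A] [Fintype B]
    (P : PrefSys A B) (M : Finset (A × B)) (hM : P.Popular M)
    (hnoaug : ¬ ∃ v, P.IsAugPath M v) :
    P.Dominant M := by
  refine ⟨hM, fun M' hM' hcard => ?_⟩
  by_contra! hlose
  have hΔ : 0 ≤ ∑ x, P.vote M' M x := by
    rw [← phi_sub_phi, sub_nonneg]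
    exact_mod_cast hlose
  obtain ⟨f, n, hw⟩ := exists_isAugWalk hM.1.uniqueMates hM'.uniqueMates hcard
  obtain ⟨k, hk, hx, hy⟩ := hw.exists_vote_eq_neg_one hM.1 hM' hnoaug
  have hodd := hw.odd
  have hall := hw.sum_vote_le hM hM'
  have hpre := hw.sum_vote_Ico_nonpos hM hM' (a := 0) (b := 2 * k + 1) (by omega) (.inl rfl)
    (.inr ⟨by omega, hx⟩)
  have hsuf := hw.sum_vote_Ico_nonpos hM hM' (a := 2 * k + 1) (b := n + 1) le_rfl
    (.inr ⟨by omega, hy⟩) (.inl rfl)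
  have hpre₂ := hw.sum_vote_emod_two hM.1 hM' (a := 0) (b := 2 * k + 1) (by omega)
  have hsuf₂ := hw.sum_vote_emod_two hM.1 hM' (a := 2 * k + 1) (b := n + 1) le_rfl
  rw [← Finset.sum_Ico_consecutive _ (Nat.zero_le (2 * k + 1)) (by omega : 2 * k + 1 ≤ n + 1)]
    at hall
  omega
end
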